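/- Let q ≥ 1 be an integer and let X be a (q+1)-regular tree. If f is a complex-valued function on the edge set of X that has finite support and is harmonic (for every vertex v the sum of f over the edges incident to v equals 0), then f is identically zero. -/

import Mathlib

open SimpleGraph

-- extraction lemma
lemma extract {V : Type*} (G : SimpleGraph V) (f : G.edgeSet → ℂ)
    (hharm : ∀ v : V, ∑ᶠ (e : G.edgeSet) (_ : v ∈ (e : Sym2 V)), f e = 0)
    (v : V) (e : G.edgeSet) (hve : v ∈ (e : Sym2 V)) (hfe : f e ≠ 0) :
    ∃ e' : G.edgeSet, e' ≠ e ∧ v ∈ (e' : Sym2 V) ∧ f e' ≠ 0 := by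
  classical
  by_contra hc
  push_neg at hc
  have h0 := hharm v
  rw [finsum_eq_single _ e (fun e' hne => by
    rw [finsum_eq_if]
    split_ifs with h
    · exact hc e' hne h
    · rfl)] at h0
  rw [finsum_eq_if, if_pos hve] at h0
  exact hfe h0

lemma notmem_support {V : Type*} {G : SimpleGraph V} {r u v : V} {p : G.Walk r u}
    (hl : p.length ≤ G.dist r u) (hlt : G.dist r u < G.dist r v) : v ∉ p.support := by
  classical
  intro hv
  have h1 : G.dist r v ≤ (p.takeUntil v hv).length := SimpleGraph.dist_le _
  have h2 := SimpleGraph.Walk.length_takeUntil_le p hv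
  omega

lemma concat_isPath {V : Type*} {G : SimpleGraph V} {r u v : V} {p : G.Walk r u}
    (hp : p.IsPath) (h : G.Adj u v) (hv : v ∉ p.support) : (p.concat h).IsPath := by
  rw [SimpleGraph.Walk.isPath_def] at hp ⊢
  rw [SimpleGraph.Walk.support_concat]
  simp [List.concat_eq_append, List.nodup_append, hp, hv]
  exact fun a ha hav => hv (hav ▸ ha)

lemma getVert_concat_len {V : Type*} {G : SimpleGraph V} {r u v : V} (p : G.Walk r u)
    (h : G.Adj u v) : (p.concat h).getVert p.length = u := by
  rw [SimpleGraph.Walk.concat_eq_append, SimpleGraph.Walk.getVert_append]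
  simp

-- parity lemma
lemma dist_ne {V : Type*} {G : SimpleGraph V} (hconn : G.Connected) (hacyc : G.IsAcyclic)
    (r u v : V) (hadj : G.Adj u v) : G.dist r u ≠ G.dist r v := by
  classical
  intro heq
  obtain ⟨p, hp, hl⟩ := hconn.exists_path_of_dist r u
  have hv : v ∉ p.support := by
    intro hvs
    have h1 : G.dist r v ≤ (p.takeUntil v hvs).length := SimpleGraph.dist_le _
    have h2 := (p.takeUntil v hvs).length_append (p.dropUntil v hvs)
    rw [p.take_spec hvs] at h2
    have h3 : (p.dropUntil v hvs).length = 0 := by omega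
    exact hadj.ne' (SimpleGraph.Walk.eq_of_length_eq_zero h3)
  obtain ⟨p', hp', hl'⟩ := hconn.exists_path_of_dist r v
  have hq : (p.concat hadj).IsPath := concat_isPath hp hadj hv
  have hpq : p.concat hadj = p' :=
    Subtype.ext_iff.mp (hacyc.path_unique ⟨p.concat hadj, hq⟩ ⟨p', hp'⟩)
  have hlen : (p.concat hadj).length = p'.length := by rw [hpq]
  rw [SimpleGraph.Walk.length_concat] at hlen
  omega

-- unique closer neighbor
lemma closer_unique {V : Type*} {G : SimpleGraph V} (hconn : G.Connected) (hacyc : G.IsAcyclic)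
    (r u w v : V) (h1 : G.Adj u v) (h2 : G.Adj w v)
    (hu : G.dist r u < G.dist r v) (hw : G.dist r w < G.dist r v) : u = w := by
  obtain ⟨p1, hp1, hl1⟩ := hconn.exists_path_of_dist r u
  obtain ⟨p2, hp2, hl2⟩ := hconn.exists_path_of_dist r w
  have hv1 : v ∉ p1.support := notmem_support hl1.le hu
  have hv2 : v ∉ p2.support := notmem_support hl2.le hw
  have hq1 : (p1.concat h1).IsPath := concat_isPath hp1 h1 hv1
  have hq2 : (p2.concat h2).IsPath := concat_isPath hp2 h2 hv2
  have heq : p1.concat h1 = p2.concat h2 :=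
    Subtype.ext_iff.mp (hacyc.path_unique ⟨p1.concat h1, hq1⟩ ⟨p2.concat h2, hq2⟩)
  have hlen : (p1.concat h1).length = (p2.concat h2).length := by rw [heq]
  rw [SimpleGraph.Walk.length_concat, SimpleGraph.Walk.length_concat] at hlen
  have hg : (p1.concat h1).getVert p1.length = (p2.concat h2).getVert p2.length := by
    rw [heq, show p1.length = p2.length by omega]
  rwa [getVert_concat_len, getVert_concat_len] at hg

/-- A complex-valued function on the edges of a graph is harmonic if, for every vertex `v`,
the sum of its values over the edges incident to `v` is zero. -/
def IsHarmonicEdgeFun {V : Type*} (G : SimpleGraph V) (f : G.edgeSet → ℂ) : Prop :=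
  ∀ v : V, ∑ᶠ (e : G.edgeSet) (_ : v ∈ (e : Sym2 V)), f e = 0

/-- On a `(q+1)`-regular tree (`q ≥ 1`), every finitely supported harmonic
function on edges is identically zero. -/
theorem harmonic_finite_support_eq_zero {V : Type*} (q : ℕ) (hq : 1 ≤ q)
    (G : SimpleGraph V) [G.LocallyFinite] (htree : G.IsTree)
    (hreg : G.IsRegularOfDegree (q + 1)) (f : G.edgeSet → ℂ)
    (hfin : (Function.support f).Finite) (hharm : IsHarmonicEdgeFun G f) :
    f = 0 := by
  classical
  have hconn := htree.isConnected
  have hacyc := htree.IsAcyclic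
  funext e0
  by_contra hne0
  rw [Pi.zero_apply] at hne0
  set r : V := (e0 : Sym2 V).out.1 with hr
  set T : Set V := {x : V | ∃ e : G.edgeSet, f e ≠ 0 ∧ x ∈ (e : Sym2 V)} with hTdef
  have hT : T.Finite := by
    have hsub : T ⊆ ⋃ e ∈ Function.support f, {x | x ∈ (e : Sym2 V)} := by
      rintro x ⟨e, hfe, hxe⟩
      exact Set.mem_biUnion hfe hxe
    refine Set.Finite.subset (Set.Finite.biUnion hfin fun e _ => ?_) hsub
    refine Sym2.inductionOn (e : Sym2 V) (fun a b => ?_)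
    rw [show {x | x ∈ s(a, b)} = {a, b} from by ext x; simp]
    exact (Set.finite_singleton b).insert a
  have hTne : (hT.toFinset).Nonempty :=
    ⟨r, hT.mem_toFinset.mpr ⟨e0, hne0, Sym2.out_fst_mem _⟩⟩
  obtain ⟨v, hvT, hmax⟩ := hT.toFinset.exists_max_image (G.dist r) hTne
  rw [Set.Finite.mem_toFinset] at hvT
  obtain ⟨e, hfe, hve⟩ := hvT
  have hmax' : ∀ x ∈ T, G.dist r x ≤ G.dist r v := fun x hx => hmax x (hT.mem_toFinset.mpr hx)
  obtain ⟨e', hne', hve', hfe'⟩ := extract G f hharm v e hve hfe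
  set u : V := Sym2.Mem.other hve with hudef
  have hu : s(v, u) = (e : Sym2 V) := Sym2.other_spec hve
  set w : V := Sym2.Mem.other hve' with hwdef
  have hw : s(v, w) = (e' : Sym2 V) := Sym2.other_spec hve'
  have hadj_u : G.Adj v u := by
    have := e.prop; rw [← hu, SimpleGraph.mem_edgeSet] at this; exact this
  have hadj_w : G.Adj v w := by
    have := e'.prop; rw [← hw, SimpleGraph.mem_edgeSet] at this; exact this
  have huw : u ≠ w := by
    intro h
    exact hne' (Subtype.ext (by rw [← hw, ← h, hu]))
  have hu_lt : G.dist r u < G.dist r v := by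
    have hle : G.dist r u ≤ G.dist r v :=
      hmax' u ⟨e, hfe, by rw [← hu]; exact Sym2.mem_mk_right v u⟩
    exact lt_of_le_of_ne hle (dist_ne hconn hacyc r u v hadj_u.symm)
  have hw_lt : G.dist r w < G.dist r v := by
    have hle : G.dist r w ≤ G.dist r v :=
      hmax' w ⟨e', hfe', by rw [← hw]; exact Sym2.mem_mk_right v w⟩
    exact lt_of_le_of_ne hle (dist_ne hconn hacyc r w v hadj_w.symm)
  exact huw (closer_unique hconn hacyc r u w v hadj_u.symm hadj_w.symm hu_lt hw_lt)
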